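/- arXiv:2102.07181 — 8 statements merged into one kernel-verified Lean document; each statement's English description precedes it below -/
import Mathlib

section
/- Assume x_⊥ ≠ 0 (so that X₊X₊ᵀ is invertible). For every y ∈ ℝ, the minimum-norm least-squares solution fitted to the training set together with the test pair (x, y), namely θ_{N+1} := X₊ᵀ(X₊X₊ᵀ)⁻¹ Y₊(y), satisfies ‖θ_{N+1}‖² = ‖θ_MN‖² + (1/‖x_⊥‖²)·(y − x⊤θ_MN)². -/
/-!
Write `θMN = Xᵀu` and `x_⊥ = x - Xᵀw` with `u = (XXᵀ)⁻¹Y`, `w = (XXᵀ)⁻¹Xx`. Since `X x_⊥ = 0`,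
the vector `x_⊥` is orthogonal to the row space of `X`, in particular to `θMN`, and
`xᵀx_⊥ = ‖x_⊥‖²`. Hence `θ := θMN + c x_⊥` with `c = (y - xᵀθMN)/‖x_⊥‖²` interpolates the augmented
data, and it lies in the row space of `X₊`. A vector in the row space of a matrix with independent
rows that interpolates `Y₊` is the minimum-norm solution, so `θ_{N+1} = θ`, and Pythagoras gives
`‖θ_{N+1}‖² = ‖θMN‖² + c²‖x_⊥‖²`.
-/

open Matrix

section RowSpace

variable {m n R : Type*} [Fintype m] [Fintype n] [DecidableEq m]

theorem isUnit_det_mul_transpose_iff [Field R] [LinearOrder R] [IsStrictOrderedRing R]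
    (A : Matrix m n R) :
    IsUnit (A * Aᵀ).det ↔ ∀ w, Aᵀ *ᵥ w = 0 → w = 0 := by
  rw [isUnit_iff_ne_zero, Ne, ← exists_mulVec_eq_zero_iff]
  constructor
  · intro h w hw
    by_contra hw0
    exact h ⟨w, hw0, by rw [← mulVec_mulVec, hw, mulVec_zero]⟩
  · rintro h ⟨w, hw0, hw⟩
    refine hw0 (h w (dotProduct_self_eq_zero.mp ?_))
    rw [dotProduct_transpose_mulVec, mulVec_mulVec, hw, dotProduct_zero]

variable [CommRing R] {A : Matrix m n R}

theorem mulVec_transpose_mulVec_inv_mulVec (hA : IsUnit (A * Aᵀ).det) (b : m → R) :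
    A *ᵥ (Aᵀ *ᵥ ((A * Aᵀ)⁻¹ *ᵥ b)) = b := by
  rw [mulVec_mulVec, mulVec_mulVec, mul_nonsing_inv _ hA, one_mulVec]

theorem transpose_mul_inv_mulVec_of_mulVec_eq (hA : IsUnit (A * Aᵀ).det) {v : m → R}
    {b : m → R} (h : A *ᵥ (Aᵀ *ᵥ v) = b) : (Aᵀ * (A * Aᵀ)⁻¹) *ᵥ b = Aᵀ *ᵥ v := by
  rw [← h, mulVec_mulVec, mulVec_mulVec, Matrix.mul_assoc, Matrix.mul_assoc,
    nonsing_inv_mul _ hA, Matrix.mul_one]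

end RowSpace

theorem transpose_mulVec_dotProduct_of_mulVec_eq_zero {m n R : Type*} [Fintype m] [Fintype n]
    [CommSemiring R] {A : Matrix m n R} {z : n → R} (hz : A *ᵥ z = 0) (u : m → R) :
    (Aᵀ *ᵥ u) ⬝ᵥ z = 0 := by
  rw [dotProduct_comm, dotProduct_transpose_mulVec, hz, dotProduct_zero]

theorem dotProduct_self_add_smul_of_dotProduct_eq_zero {n R : Type*} [Fintype n] [CommRing R]
    {a b : n → R} (h : a ⬝ᵥ b = 0) (c : R) :
    (a + c • b) ⬝ᵥ (a + c • b) = a ⬝ᵥ a + c ^ 2 * (b ⬝ᵥ b) := by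
  simp only [dotProduct_add, add_dotProduct, dotProduct_smul, smul_dotProduct, smul_eq_mul,
    h, dotProduct_comm b a]
  ring

section Snoc

variable {N : ℕ} {m R : Type*}

theorem of_snoc_mulVec [Fintype m] [CommSemiring R] (X : Matrix (Fin N) m R) (x t : m → R) :
    of (Fin.snoc X x) *ᵥ t = Fin.snoc (X *ᵥ t) (x ⬝ᵥ t) := by
  ext i
  induction i using Fin.lastCases <;> simp [mulVec, dotProduct, Fin.snoc]

theorem transpose_of_snoc_mulVec_snoc [CommSemiring R] (X : Matrix (Fin N) m R) (x : m → R)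
    (u : Fin N → R) (a : R) :
    (of (Fin.snoc X x))ᵀ *ᵥ Fin.snoc u a = Xᵀ *ᵥ u + a • x := by
  ext j
  simp [mulVec, dotProduct, Fin.sum_univ_castSucc, mul_comm, Fin.snoc]

theorem eq_zero_of_transpose_of_snoc_mulVec_eq_zero [Fintype m] [Field R] {X : Matrix (Fin N) m R}
    {x z : m → R} (hX : ∀ u, Xᵀ *ᵥ u = 0 → u = 0) (hz : X *ᵥ z = 0) (hxz : x ⬝ᵥ z ≠ 0)
    (w : Fin (N + 1) → R) (hw : (of (Fin.snoc X x))ᵀ *ᵥ w = 0) : w = 0 := by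
  rw [← Fin.snoc_init_self w] at hw ⊢
  rw [transpose_of_snoc_mulVec_snoc] at hw
  have hlast : w (Fin.last N) = 0 := by
    have := congrArg (· ⬝ᵥ z) hw
    simpa [add_dotProduct, transpose_mulVec_dotProduct_of_mulVec_eq_zero hz, hxz] using this
  rw [hlast, zero_smul, add_zero] at hw
  rw [hX _ hw, hlast]
  exact Fin.snoc_init_self 0

end Snoc

/-- The norm of the minimum-norm least-squares solution fitted to the training set
together with the test pair `(x, y)` satisfies
`‖θ_{N+1}‖² = ‖θ_MN‖² + (1/‖x_⊥‖²) * (y − xᵀθ_MN)²`. -/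
theorem mn_norm_recursion {N M : ℕ}
    (X : Matrix (Fin N) (Fin M) ℝ) (Y : Fin N → ℝ) (x : Fin M → ℝ)
    (hX : IsUnit (X * Xᵀ).det)
    (Xplus : Matrix (Fin M) (Fin N) ℝ) (hXplus : Xplus = Xᵀ * (X * Xᵀ)⁻¹)
    (θMN : Fin M → ℝ) (hθMN : θMN = Xplus.mulVec Y)
    (xperp : Fin M → ℝ)
    (hxperp : xperp = ((1 : Matrix (Fin M) (Fin M) ℝ) - Xplus * X).mulVec x)
    (hxperp_ne : xperp ≠ 0)
    (Xp : Matrix (Fin (N + 1)) (Fin M) ℝ) (hXp : Xp = Matrix.of (Fin.snoc X x))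
    (y : ℝ)
    (θN1 : Fin M → ℝ)
    (hθN1 : θN1 = (Xpᵀ * (Xp * Xpᵀ)⁻¹).mulVec (Fin.snoc Y y)) :
    θN1 ⬝ᵥ θN1 = θMN ⬝ᵥ θMN + (1 / (xperp ⬝ᵥ xperp)) * (y - x ⬝ᵥ θMN) ^ 2 := by
  subst hXplus hXp hθN1
  set u := (X * Xᵀ)⁻¹ *ᵥ Y
  set w := (X * Xᵀ)⁻¹ *ᵥ (X *ᵥ x)
  have hθMN_eq : θMN = Xᵀ *ᵥ u := by rw [hθMN, ← mulVec_mulVec]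
  have hxperp_eq : xperp = x - Xᵀ *ᵥ w := by
    rw [hxperp, sub_mulVec, one_mulVec, ← mulVec_mulVec, ← mulVec_mulVec]
  have hXθMN : X *ᵥ θMN = Y := by rw [hθMN_eq, mulVec_transpose_mulVec_inv_mulVec hX]
  have hXxperp : X *ᵥ xperp = 0 := by
    rw [hxperp_eq, mulVec_sub, mulVec_transpose_mulVec_inv_mulVec hX, sub_self]
  have horth : θMN ⬝ᵥ xperp = 0 :=
    hθMN_eq ▸ transpose_mulVec_dotProduct_of_mulVec_eq_zero hXxperp u
  have hx_xperp : x ⬝ᵥ xperp = xperp ⬝ᵥ xperp := by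
    rw [show x = xperp + Xᵀ *ᵥ w by rw [hxperp_eq, sub_add_cancel], add_dotProduct,
      transpose_mulVec_dotProduct_of_mulVec_eq_zero hXxperp, add_zero]
  have hxperp_sq : xperp ⬝ᵥ xperp ≠ 0 := by rwa [Ne, dotProduct_self_eq_zero]
  set c := (y - x ⬝ᵥ θMN) / (xperp ⬝ᵥ xperp) with hc
  have hfit : of (Fin.snoc X x) *ᵥ (θMN + c • xperp) = Fin.snoc Y y := by
    rw [of_snoc_mulVec, mulVec_add, mulVec_smul, hXxperp, smul_zero, add_zero, hXθMN,
      dotProduct_add, dotProduct_smul, hx_xperp, smul_eq_mul, div_mul_cancel₀ _ hxperp_sq,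
      add_sub_cancel]
  have hrow : θMN + c • xperp = (of (Fin.snoc X x))ᵀ *ᵥ Fin.snoc (u - c • w) c := by
    rw [transpose_of_snoc_mulVec_snoc, hθMN_eq, hxperp_eq, mulVec_sub, mulVec_smul, smul_sub]
    abel
  have hunit : IsUnit (of (Fin.snoc X x) * (of (Fin.snoc X x))ᵀ).det :=
    (isUnit_det_mul_transpose_iff _).mpr <| eq_zero_of_transpose_of_snoc_mulVec_eq_zero
      ((isUnit_det_mul_transpose_iff X).mp hX) hXxperp (hx_xperp ▸ hxperp_sq)
  rw [transpose_mul_inv_mulVec_of_mulVec_eq hunit (hrow ▸ hfit), ← hrow,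
    dotProduct_self_add_smul_of_dotProduct_eq_zero horth, hc]
  field_simp
end

section
/- Let σ > 0, λ > 0 and y ∈ ℝ. Let θ_N := (XᵀX + λI)⁻¹XᵀY be the ridge solution on the training set and θ₊ := (XᵀX + x xᵀ + λI)⁻¹(XᵀY + x y) the ridge solution on the training set augmented by the test pair (x, y), with the same regularization λ. Then, with K₀ := 1 + x⊤X⁺(X⁺)ᵀx, the genie probability assignment satisfies (2πσ²)^{−1/2}·exp(−(y − x⊤θ₊)²/(2σ²)) ≤ (2πσ²)^{−1/2}·exp(−(y − x⊤θ_N)² / (2σ²·K₀²·(1 + ‖x_⊥‖²/(K₀λ))²)). -/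
/-!
Write `A = XᵀX + λI` and `s = xᵀA⁻¹x`. By Sherman–Morrison, adding the test pair divides the
residual: `y - xᵀθ₊ = (y - xᵀθ_N) / (1 + s)`. Splitting `x = Xᵀa + x_⊥` with `a = (X⁺)ᵀx`, the
energy bound `zᵀ(XᵀX + λI)⁻¹z ≤ ‖a‖² + ‖b‖²/λ` for `z = Xᵀa + b` gives
`1 + s ≤ K₀ + ‖x_⊥‖²/λ = K₀(1 + ‖x_⊥‖²/(K₀λ))`, and the Gaussian density decreases in the
squared residual.
-/

open Matrix

section

variable {m n : Type*} [Fintype m] [Fintype n]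

theorem sub_dotProduct_inv_add_vecMulVec_mulVec [DecidableEq n] {K : Type*} [Field K]
    {A : Matrix n n K} (hA : IsUnit A.det) (u v : n → K) (hs : 1 + v ⬝ᵥ A⁻¹ *ᵥ u ≠ 0)
    (b : n → K) (y : K) :
    y - v ⬝ᵥ (A + vecMulVec u v)⁻¹ *ᵥ (b + y • u) =
      (y - v ⬝ᵥ A⁻¹ *ᵥ b) / (1 + v ⬝ᵥ A⁻¹ *ᵥ u) := by
  set c := (y - v ⬝ᵥ A⁻¹ *ᵥ b) / (1 + v ⬝ᵥ A⁻¹ *ᵥ u)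
  have hc : c * (1 + v ⬝ᵥ A⁻¹ *ᵥ u) = y - v ⬝ᵥ A⁻¹ *ᵥ b := div_mul_cancel₀ _ hs
  have hdet : IsUnit (A + vecMulVec u v).det := by
    rw [vecMulVec_eq Unit, det_add_mul _ _ hA, det_unique (n := Unit), Matrix.mul_assoc,
      ← replicateCol_mulVec, Matrix.add_apply, one_apply_eq, replicateRow_mul_replicateCol_apply]
    exact hA.mul hs.isUnit
  have hAinv (z : n → K) : A *ᵥ A⁻¹ *ᵥ z = z := by
    rw [mulVec_mulVec, mul_nonsing_inv _ hA, one_mulVec]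
  have hsol : (A + vecMulVec u v) *ᵥ (A⁻¹ *ᵥ b + c • A⁻¹ *ᵥ u) = b + y • u := by
    rw [add_mulVec, vecMulVec_mulVec, op_smul_eq_smul, mulVec_add, mulVec_smul, hAinv, hAinv,
      dotProduct_add, dotProduct_smul, smul_eq_mul, add_assoc, ← add_smul]
    congr 2
    linear_combination hc
  rw [← hsol, mulVec_mulVec, nonsing_inv_mul _ hdet, one_mulVec, dotProduct_add, dotProduct_smul,
    smul_eq_mul]
  linear_combination -hc

theorem transpose_mul_transpose_pinv {K : Type*} [Field K] [DecidableEq m] (X : Matrix m n K) :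
    Xᵀ * (Xᵀ * (X * Xᵀ)⁻¹)ᵀ = Xᵀ * (X * Xᵀ)⁻¹ * X := by
  rw [transpose_mul, transpose_nonsing_inv, transpose_mul, transpose_transpose, Matrix.mul_assoc]

theorem dotProduct_mul_transpose_self_mulVec {R : Type*} [CommSemiring R] (B : Matrix m n R)
    (v : m → R) : v ⬝ᵥ (B * Bᵀ) *ᵥ v = Bᵀ *ᵥ v ⬝ᵥ Bᵀ *ᵥ v := by
  rw [← mulVec_mulVec, dotProduct_mulVec, mulVec_transpose]

theorem posDef_transpose_mul_self_add_smul_one [DecidableEq n] (X : Matrix m n ℝ) {lam : ℝ}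
    (hlam : 0 < lam) :
    (Xᵀ * X + lam • (1 : Matrix n n ℝ)).PosDef :=
  PosDef.posSemidef_add (by simpa using posSemidef_conjTranspose_mul_self X) (PosDef.one.smul hlam)

theorem dotProduct_inv_transpose_mul_self_add_smul_one_mulVec_le [DecidableEq n]
    (X : Matrix m n ℝ) {lam : ℝ} (hlam : 0 < lam) (a : m → ℝ) (b : n → ℝ) :
    (Xᵀ *ᵥ a + b) ⬝ᵥ (Xᵀ * X + lam • (1 : Matrix n n ℝ))⁻¹ *ᵥ (Xᵀ *ᵥ a + b) ≤
      a ⬝ᵥ a + b ⬝ᵥ b / lam := by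
  -- with `u = A⁻¹z`, both `z ⬝ u = ‖Xu‖² + λ‖u‖²` and `z ⬝ u = a ⬝ Xu + b ⬝ u`;
  -- complete the squares
  set A := Xᵀ * X + lam • (1 : Matrix n n ℝ)
  set u := A⁻¹ *ᵥ (Xᵀ *ᵥ a + b)
  have hu : A *ᵥ u = Xᵀ *ᵥ a + b := by
    have hA := (posDef_transpose_mul_self_add_smul_one X hlam).isUnit
    rw [mulVec_mulVec, mul_nonsing_inv _ ((isUnit_iff_isUnit_det A).mp hA), one_mulVec]
  have henergy : (Xᵀ *ᵥ a + b) ⬝ᵥ u = X *ᵥ u ⬝ᵥ X *ᵥ u + lam * u ⬝ᵥ u := by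
    rw [← hu, dotProduct_comm, add_mulVec, ← mulVec_mulVec, dotProduct_add, dotProduct_mulVec,
      vecMul_transpose, smul_mulVec, one_mulVec, dotProduct_smul, smul_eq_mul]
  have hwork : (Xᵀ *ᵥ a + b) ⬝ᵥ u = a ⬝ᵥ X *ᵥ u + b ⬝ᵥ u := by
    rw [add_dotProduct, dotProduct_comm, dotProduct_mulVec, vecMul_transpose, dotProduct_comm]
  have h₁ := dotProduct_self_star_nonneg (X *ᵥ u - a)
  have h₂ := dotProduct_self_star_nonneg (lam • u - b)
  simp only [star_trivial, sub_dotProduct, dotProduct_sub, smul_dotProduct, dotProduct_smul,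
    smul_eq_mul, dotProduct_comm (X *ᵥ u) a, dotProduct_comm u b] at h₁ h₂
  rw [← sub_le_iff_le_add', le_div_iff₀ hlam]
  nlinarith [mul_nonneg hlam.le h₁]

end

theorem exp_neg_div_sq_div_le_exp_neg_sq_div_mul_sq {v p q : ℝ} (hv : 0 ≤ v) (hp : 0 < p)
    (hpq : p ≤ q) (r : ℝ) : Real.exp (-(r / p) ^ 2 / v) ≤ Real.exp (-r ^ 2 / (v * q ^ 2)) := by
  rw [show -r ^ 2 / (v * q ^ 2) = -(r / q) ^ 2 / v by ring, Real.exp_le_exp, neg_div, neg_div,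
    neg_le_neg_iff, div_pow, div_pow]
  gcongr ?_ / _
  exact div_le_div_of_nonneg_left (sq_nonneg r) (by positivity) (by gcongr)

theorem genie_upper_bound_general {N M : ℕ}
    (X : Matrix (Fin N) (Fin M) ℝ) (Y : Fin N → ℝ) (x : Fin M → ℝ)
    (Xplus : Matrix (Fin M) (Fin N) ℝ) (hXplus : Xplus = Xᵀ * (X * Xᵀ)⁻¹)
    (xperp : Fin M → ℝ)
    (hxperp : xperp = ((1 : Matrix (Fin M) (Fin M) ℝ) - Xplus * X).mulVec x)
    (σ lam y : ℝ) (hlam : 0 < lam)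
    (θN : Fin M → ℝ)
    (hθN : θN = (Xᵀ * X + lam • (1 : Matrix (Fin M) (Fin M) ℝ))⁻¹.mulVec (Xᵀ.mulVec Y))
    (θp : Fin M → ℝ)
    (hθp : θp = (Xᵀ * X + vecMulVec x x + lam • (1 : Matrix (Fin M) (Fin M) ℝ))⁻¹.mulVec
      (Xᵀ.mulVec Y + y • x))
    (K0 : ℝ) (hK0 : K0 = 1 + x ⬝ᵥ (Xplus * Xplusᵀ).mulVec x) :
    (Real.sqrt (2 * Real.pi * σ ^ 2))⁻¹ * Real.exp (-(y - x ⬝ᵥ θp) ^ 2 / (2 * σ ^ 2)) ≤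
      (Real.sqrt (2 * Real.pi * σ ^ 2))⁻¹ *
        Real.exp (-(y - x ⬝ᵥ θN) ^ 2 /
          (2 * σ ^ 2 * K0 ^ 2 * (1 + (xperp ⬝ᵥ xperp) / (K0 * lam)) ^ 2)) := by
  set A := Xᵀ * X + lam • (1 : Matrix (Fin M) (Fin M) ℝ)
  have hA := posDef_transpose_mul_self_add_smul_one X hlam
  set s := x ⬝ᵥ A⁻¹ *ᵥ x
  have hs : 0 ≤ s := by simpa using hA.inv.posSemidef.dotProduct_mulVec_nonneg x
  have hresidual : y - x ⬝ᵥ θp = (y - x ⬝ᵥ θN) / (1 + s) := by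
    rw [hθp, hθN, add_right_comm]
    exact sub_dotProduct_inv_add_vecMulVec_mulVec ((isUnit_iff_isUnit_det A).mp hA.isUnit) x x
      (by positivity) _ y
  have hdecomp : Xᵀ *ᵥ (Xplusᵀ *ᵥ x) + xperp = x := by
    rw [hxperp, mulVec_mulVec, hXplus, transpose_mul_transpose_pinv, sub_mulVec, one_mulVec]
    abel
  have hK0_sub : K0 - 1 = Xplusᵀ *ᵥ x ⬝ᵥ Xplusᵀ *ᵥ x := by
    rw [hK0, dotProduct_mul_transpose_self_mulVec, add_sub_cancel_left]
  have hK0_pos : 0 < K0 := by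
    have := dotProduct_self_star_nonneg (Xplusᵀ *ᵥ x)
    rw [star_trivial] at this
    linarith
  have hs_le : 1 + s ≤ K0 + xperp ⬝ᵥ xperp / lam := by
    have h := dotProduct_inv_transpose_mul_self_add_smul_one_mulVec_le X hlam (Xplusᵀ *ᵥ x) xperp
    rw [hdecomp, ← hK0_sub] at h
    linarith
  have hden : 2 * σ ^ 2 * K0 ^ 2 * (1 + xperp ⬝ᵥ xperp / (K0 * lam)) ^ 2 =
      2 * σ ^ 2 * (K0 + xperp ⬝ᵥ xperp / lam) ^ 2 := by
    field_simp
  rw [hresidual, hden]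
  gcongr _ * ?_
  exact exp_neg_div_sq_div_le_exp_neg_sq_div_mul_sq (by positivity) (by positivity) hs_le _

/-- Upper bound on the genie probability assignment for over-parameterized ridge regression. -/
theorem genie_upper_bound {N M : ℕ}
    (X : Matrix (Fin N) (Fin M) ℝ) (Y : Fin N → ℝ) (x : Fin M → ℝ)
    (hX : IsUnit (X * Xᵀ).det)
    (Xplus : Matrix (Fin M) (Fin N) ℝ) (hXplus : Xplus = Xᵀ * (X * Xᵀ)⁻¹)
    (xperp : Fin M → ℝ)
    (hxperp : xperp = ((1 : Matrix (Fin M) (Fin M) ℝ) - Xplus * X).mulVec x)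
    (σ lam y : ℝ) (hσ : 0 < σ) (hlam : 0 < lam)
    (θN : Fin M → ℝ)
    (hθN : θN = (Xᵀ * X + lam • (1 : Matrix (Fin M) (Fin M) ℝ))⁻¹.mulVec (Xᵀ.mulVec Y))
    (θp : Fin M → ℝ)
    (hθp : θp = (Xᵀ * X + vecMulVec x x + lam • (1 : Matrix (Fin M) (Fin M) ℝ))⁻¹.mulVec
      (Xᵀ.mulVec Y + y • x))
    (K0 : ℝ) (hK0 : K0 = 1 + x ⬝ᵥ (Xplus * Xplusᵀ).mulVec x) :
    (Real.sqrt (2 * Real.pi * σ ^ 2))⁻¹ * Real.exp (-(y - x ⬝ᵥ θp) ^ 2 / (2 * σ ^ 2)) ≤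
      (Real.sqrt (2 * Real.pi * σ ^ 2))⁻¹ *
        Real.exp (-(y - x ⬝ᵥ θN) ^ 2 /
          (2 * σ ^ 2 * K0 ^ 2 * (1 + (xperp ⬝ᵥ xperp) / (K0 * lam)) ^ 2)) :=
  genie_upper_bound_general X Y x Xplus hXplus xperp hxperp σ lam y hlam θN hθN θp hθp K0 hK0
end

section
/- Let σ > 0. For y ∈ ℝ let θ̂(y) := (XᵀX + x xᵀ)⁻¹(XᵀY + x y) be the least-squares solution on the training set augmented by the test pair (x, y) (XᵀX + x xᵀ is invertible since XᵀX is positive definite). Then the pNML normalization factor for under-parameterized linear regression equals ∫_ℝ (2πσ²)^{−1/2}·exp(−(y − x⊤θ̂(y))²/(2σ²)) dy = 1 + x⊤(XᵀX)⁻¹x; in particular the pNML regret is Γ₀ = log(1 + x⊤(XᵀX)⁻¹x). -/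
open Matrix MeasureTheory

/-! Moving the rank-one term `x xᵀ θ` of the augmented normal equations to the right-hand side
shows that the residual `y - xᵀθ̂(y)` is the residual `y - xᵀθ_N` of the training-set solution
divided by `1 + xᵀ(XᵀX)⁻¹x`, a number `≥ 1` because `XᵀX` is positive definite. The pNML
integrand is therefore a Gaussian density evaluated at `(y - xᵀθ_N) / (1 + xᵀ(XᵀX)⁻¹x)`, and this
rescaling multiplies its integral by `1 + xᵀ(XᵀX)⁻¹x`. -/

namespace Matrix

variable {n R : Type*} [Fintype n] [DecidableEq n] [CommRing R]

theorem sub_dotProduct_mul_one_add_of_add_vecMulVec_self_mulVec_eq {A : Matrix n n R}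
    (hA : IsUnit A.det) {x b θ : n → R} {y : R} (hθ : (A + vecMulVec x x) *ᵥ θ = b + y • x) :
    (y - x ⬝ᵥ θ) * (1 + x ⬝ᵥ A⁻¹ *ᵥ x) = y - x ⬝ᵥ A⁻¹ *ᵥ b := by
  have hAθ : A *ᵥ θ = b + (y - x ⬝ᵥ θ) • x := by
    rw [add_mulVec, vecMulVec_mulVec, op_smul_eq_smul] at hθ
    rw [sub_smul, ← add_sub_assoc, ← hθ, add_sub_cancel_right]
  have hθ_eq : θ = A⁻¹ *ᵥ b + (y - x ⬝ᵥ θ) • A⁻¹ *ᵥ x := by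
    rw [← mulVec_smul, ← mulVec_add, ← hAθ, mulVec_mulVec, nonsing_inv_mul _ hA, one_mulVec]
  have hxθ := congrArg (x ⬝ᵥ ·) hθ_eq
  simp only [dotProduct_add, dotProduct_smul, smul_eq_mul] at hxθ
  linear_combination -hxθ

end Matrix

namespace ProbabilityTheory

theorem integral_gaussianPDFReal_comp_div (μ : ℝ) {v : NNReal} (hv : v ≠ 0) (d k : ℝ) :
    ∫ y, gaussianPDFReal μ v ((y - d) / k) = |k| := by
  calc ∫ y, gaussianPDFReal μ v ((y - d) / k)
      = ∫ y, gaussianPDFReal μ v (y / k) :=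
        integral_sub_right_eq_self (fun y ↦ gaussianPDFReal μ v (y / k)) d
    _ = |k| • ∫ y, gaussianPDFReal μ v y := Measure.integral_comp_div _ _
    _ = |k| := by rw [integral_gaussianPDFReal_eq_one μ hv, smul_eq_mul, mul_one]

end ProbabilityTheory

/-- The pNML normalization factor for under-parameterized linear regression equals
`K₀ = 1 + xᵀ(XᵀX)⁻¹x`; in particular the pNML regret is `Γ₀ = log K₀`. -/
theorem underparam_pnml_normalization {N M : ℕ}
    (X : Matrix (Fin N) (Fin M) ℝ) (Y : Fin N → ℝ) (x : Fin M → ℝ)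
    (hX : IsUnit (Xᵀ * X).det)
    (σ : ℝ) (hσ : 0 < σ)
    (θhat : ℝ → Fin M → ℝ)
    (hθhat : ∀ y : ℝ, θhat y = (Xᵀ * X + vecMulVec x x)⁻¹.mulVec (Xᵀ.mulVec Y + y • x)) :
    (∫ y : ℝ, (Real.sqrt (2 * Real.pi * σ ^ 2))⁻¹ *
        Real.exp (-(y - x ⬝ᵥ θhat y) ^ 2 / (2 * σ ^ 2))) =
      1 + x ⬝ᵥ (Xᵀ * X)⁻¹.mulVec x ∧
    Real.log (∫ y : ℝ, (Real.sqrt (2 * Real.pi * σ ^ 2))⁻¹ *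
        Real.exp (-(y - x ⬝ᵥ θhat y) ^ 2 / (2 * σ ^ 2))) =
      Real.log (1 + x ⬝ᵥ (Xᵀ * X)⁻¹.mulVec x) := by
  set A := Xᵀ * X
  set s := x ⬝ᵥ A⁻¹ *ᵥ x
  have hA : A.PosDef := (by simpa using posSemidef_conjTranspose_mul_self X : A.PosSemidef)
    |>.posDef_iff_isUnit.mpr ((isUnit_iff_isUnit_det A).mpr hX)
  have hs : 0 < 1 + s := by
    have := hA.posSemidef.inv.dotProduct_mulVec_nonneg x
    rw [star_trivial] at this
    linarith
  have hAxx : IsUnit (A + vecMulVec x x).det :=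
    (isUnit_iff_isUnit_det _).mp
      (hA.add_posSemidef (by simpa using posSemidef_vecMulVec_self_star x)).isUnit
  have hres (y : ℝ) : y - x ⬝ᵥ θhat y = (y - x ⬝ᵥ A⁻¹ *ᵥ (Xᵀ *ᵥ Y)) / (1 + s) := by
    refine eq_div_of_mul_eq hs.ne' <|
      sub_dotProduct_mul_one_add_of_add_vecMulVec_self_mulVec_eq hX ?_
    rw [hθhat, mulVec_mulVec, mul_nonsing_inv _ hAxx, one_mulVec]
  have hK : ∫ y : ℝ, (Real.sqrt (2 * Real.pi * σ ^ 2))⁻¹ *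
      Real.exp (-(y - x ⬝ᵥ θhat y) ^ 2 / (2 * σ ^ 2)) = 1 + s := by
    have hv : σ.toNNReal ^ 2 ≠ 0 := by positivity
    simpa [hres, ProbabilityTheory.gaussianPDFReal, abs_of_pos hs, hσ.le] using
      ProbabilityTheory.integral_gaussianPDFReal_comp_div 0 hv (x ⬝ᵥ A⁻¹ *ᵥ (Xᵀ *ᵥ Y)) (1 + s)
  exact ⟨hK, by rw [hK]⟩
end

section
/- For every y ∈ ℝ, the least-squares solution on the training set augmented by the test pair (x, y), θ̂(y) := (XᵀX + x xᵀ)⁻¹(XᵀY + x y), has test residual y − x⊤θ̂(y) = (y − x⊤θ_N) / (1 + x⊤(XᵀX)⁻¹x). -/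
/-!
Writing `A = XᵀX`, `b = XᵀY` and `c = xᵀA⁻¹x`, the augmented solution is the rank-one update
`θ̂ = θ_N + t • A⁻¹x` with `t = (y - xᵀθ_N) / (1 + c)`, as one checks by applying `A + x xᵀ`;
then `y - xᵀθ̂ = (y - xᵀθ_N) - t c = t`. The update is legitimate because `c ≥ 0`
(`A⁻¹` is positive semidefinite), so `1 + c ≠ 0`, and by the matrix determinant lemma
`det (A + x xᵀ) = det A * (1 + c)` is nonzero.
-/

open Matrix

namespace Matrix

variable {n K : Type*} [Fintype n] [DecidableEq n] [Field K]

theorem det_add_vecMulVec {A : Matrix n n K} (hA : IsUnit A.det) (u v : n → K) :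
    (A + vecMulVec u v).det = A.det * (1 + v ⬝ᵥ A⁻¹ *ᵥ u) := by
  rw [vecMulVec_eq Unit, det_add_replicateCol_mul_replicateRow hA, Matrix.mul_assoc,
    ← replicateCol_mulVec, replicateRow_mul_replicateCol, det_unique (n := Unit)]
  simp

theorem inv_add_vecMulVec_mulVec_add_smul {A : Matrix n n K} (hA : IsUnit A.det) {u v : n → K}
    (hc : 1 + v ⬝ᵥ A⁻¹ *ᵥ u ≠ 0) (b : n → K) (y : K) :
    (A + vecMulVec u v)⁻¹ *ᵥ (b + y • u) =
      A⁻¹ *ᵥ b + ((y - v ⬝ᵥ A⁻¹ *ᵥ b) / (1 + v ⬝ᵥ A⁻¹ *ᵥ u)) • A⁻¹ *ᵥ u := by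
  set t := (y - v ⬝ᵥ A⁻¹ *ᵥ b) / (1 + v ⬝ᵥ A⁻¹ *ᵥ u)
  have hB : IsUnit (A + vecMulVec u v).det := by
    rw [det_add_vecMulVec hA]
    exact hA.mul hc.isUnit
  have ht : t * (1 + v ⬝ᵥ A⁻¹ *ᵥ u) = y - v ⬝ᵥ A⁻¹ *ᵥ b := div_mul_cancel₀ _ hc
  have hAA (w : n → K) : A *ᵥ A⁻¹ *ᵥ w = w := by
    rw [mulVec_mulVec, mul_nonsing_inv A hA, one_mulVec]
  have hsolve : (A + vecMulVec u v) *ᵥ (A⁻¹ *ᵥ b + t • A⁻¹ *ᵥ u) = b + y • u := by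
    rw [add_mulVec, mulVec_add, mulVec_add, mulVec_smul, mulVec_smul, hAA, hAA, vecMulVec_mulVec,
      vecMulVec_mulVec, op_smul_eq_smul, op_smul_eq_smul, eq_add_of_sub_eq' ht.symm]
    module
  rw [← hsolve, mulVec_mulVec, nonsing_inv_mul _ hB, one_mulVec]

theorem sub_dotProduct_inv_add_vecMulVec_mulVec_add_smul {A : Matrix n n K} (hA : IsUnit A.det)
    {u v : n → K} (hc : 1 + v ⬝ᵥ A⁻¹ *ᵥ u ≠ 0) (b : n → K) (y : K) :
    y - v ⬝ᵥ (A + vecMulVec u v)⁻¹ *ᵥ (b + y • u) =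
      (y - v ⬝ᵥ A⁻¹ *ᵥ b) / (1 + v ⬝ᵥ A⁻¹ *ᵥ u) := by
  rw [inv_add_vecMulVec_mulVec_add_smul hA hc, dotProduct_add, dotProduct_smul, smul_eq_mul]
  field_simp
  ring

end Matrix

/-- Test residual of the least-squares solution on the training set augmented by `(x, y)`:
`y − xᵀθ̂(y) = (y − xᵀθ_N) / (1 + xᵀ(XᵀX)⁻¹x)`. -/
theorem augmented_ls_residual {N M : ℕ}
    (X : Matrix (Fin N) (Fin M) ℝ) (Y : Fin N → ℝ) (x : Fin M → ℝ)
    (hX : IsUnit (Xᵀ * X).det)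
    (θN : Fin M → ℝ) (hθN : θN = (Xᵀ * X)⁻¹.mulVec (Xᵀ.mulVec Y))
    (y : ℝ)
    (θhat : Fin M → ℝ)
    (hθhat : θhat = (Xᵀ * X + vecMulVec x x)⁻¹.mulVec (Xᵀ.mulVec Y + y • x)) :
    y - x ⬝ᵥ θhat = (y - x ⬝ᵥ θN) / (1 + x ⬝ᵥ (Xᵀ * X)⁻¹.mulVec x) := by
  have hc : 0 ≤ x ⬝ᵥ (Xᵀ * X)⁻¹ *ᵥ x := by
    simpa using (posSemidef_conjTranspose_mul_self X).inv.dotProduct_mulVec_nonneg x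
  subst hθN hθhat
  exact sub_dotProduct_inv_add_vecMulVec_mulVec_add_smul hX (by positivity) _ y
end

section
/- Let 𝒴 be a finite nonempty set, let p : 𝒴 → ℝ be a strictly positive function (the genie's probability assignment p(y) = p_{θ̂(y)}(y|x)), and set K := Σ_{y ∈ 𝒴} p(y). Then: (i) the probability assignment q* := p/K satisfies log(p(y)/q*(y)) = log K for every y ∈ 𝒴; and (ii) for every probability assignment q : 𝒴 → ℝ with q(y) ≥ 0 for all y and Σ_{y} q(y) = 1, there exists y ∈ 𝒴 with K·q(y) ≤ p(y), so that max_{y} log(p(y)/q(y)) ≥ log K whenever q is strictly positive. Hence q* attains the min-max regret min_q max_y log(p(y)/q(y)) = log K. -/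
open Finset

/-! Since `∑ y, K * q y = K = ∑ y, p y`, no probability assignment `q` can have
`K * q y > p y` on every label; `q* = p / K` turns each of these inequalities into an equality. -/

theorem exists_sum_mul_le_of_sum_eq_one {ι : Type*} [Fintype ι] [Nonempty ι] (p q : ι → ℝ)
    (hq : ∑ i, q i = 1) : ∃ i, (∑ j, p j) * q i ≤ p i := by
  have hsum : ∑ i, (∑ j, p j) * q i ≤ ∑ i, p i := by rw [← mul_sum, hq, mul_one]
  simpa using exists_le_of_sum_le univ_nonempty hsum

theorem Real.log_le_log_div_of_mul_le {K a b : ℝ} (hK : 0 < K) (hb : 0 < b) (h : K * b ≤ a) :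
    Real.log K ≤ Real.log (a / b) :=
  Real.log_le_log hK ((le_div_iff₀ hb).mpr h)

/-- The pNML learner `q* = p / K` equalizes the regret `log(p(y)/q*(y)) = log K`, and every
probability assignment `q` suffers regret at least `log K` on some label; hence `q*` attains the
min-max regret `min_q max_y log(p(y)/q(y)) = log K`. -/
theorem pnml_minmax_regret {𝒴 : Type*} [Fintype 𝒴] [Nonempty 𝒴]
    (p : 𝒴 → ℝ) (hp : ∀ y, 0 < p y)
    (K : ℝ) (hK : K = ∑ y, p y)
    (qstar : 𝒴 → ℝ) (hqstar : qstar = fun y => p y / K) :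
    (∀ y, Real.log (p y / qstar y) = Real.log K) ∧
    (∀ q : 𝒴 → ℝ, (∀ y, 0 ≤ q y) → (∑ y, q y) = 1 →
      (∃ y, K * q y ≤ p y) ∧ ((∀ y, 0 < q y) → ∃ y, Real.log K ≤ Real.log (p y / q y))) ∧
    IsLeast {r : ℝ | ∃ q : 𝒴 → ℝ, (∀ y, 0 < q y) ∧ (∑ y, q y) = 1 ∧
        r = ⨆ y, Real.log (p y / q y)}
      (Real.log K) := by
  have hKpos : 0 < K := hK ▸ sum_pos (fun y _ => hp y) univ_nonempty
  have hequalizer : ∀ y, p y / qstar y = K := fun y => by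
    rw [hqstar, div_div_cancel₀ (hp y).ne']
  have hworst : ∀ q : 𝒴 → ℝ, ∑ y, q y = 1 → ∃ y, K * q y ≤ p y := fun q hq =>
    hK ▸ exists_sum_mul_le_of_sum_eq_one p q hq
  have hlog : ∀ q : 𝒴 → ℝ, (∀ y, 0 < q y) → ∑ y, q y = 1 →
      ∃ y, Real.log K ≤ Real.log (p y / q y) := fun q hpos hq =>
    (hworst q hq).imp fun y hy => Real.log_le_log_div_of_mul_le hKpos (hpos y) hy
  refine ⟨fun y => by rw [hequalizer],
    fun q _ hq => ⟨hworst q hq, fun hpos => hlog q hpos hq⟩,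
    ⟨qstar, ?_, ?_, ?_⟩, ?_⟩
  · exact fun y => hqstar ▸ div_pos (hp y) hKpos
  · rw [hqstar, ← sum_div, ← hK, div_self hKpos.ne']
  · simp only [hequalizer, ciSup_const]
  · rintro r ⟨q, hpos, hq, rfl⟩
    obtain ⟨y, hy⟩ := hlog q hpos hq
    exact hy.trans <|
      le_ciSup (f := fun y => Real.log (p y / q y)) (Finite.bddAbove_range _) y
end

section
/- For every λ ≥ 0, the ridge solution θ_λ := Xᵀ(X Xᵀ + λI)⁻¹Y satisfies the first-order (tangent-line) lower bound ‖θ_λ‖² ≥ ‖θ_MN‖² − 2λ·θ_MN⊤X⁺(X⁺)ᵀθ_MN. -/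
/-!
Write `A = X Xᵀ` and `u = A⁻¹ Y`, so that `θ_MN = Xᵀ u`, `(X⁺)ᵀ θ_MN = u` and
`⟨θ_MN, θ_λ⟩ = Yᵀ (A + λ I)⁻¹ Y`. Expanding `‖θ_λ - θ_MN‖² ≥ 0` reduces the claim to the Loewner
bound `(A + λ I)⁻¹ ≥ A⁻¹ - λ A⁻²`, the tangent line of the operator convex map `t ↦ t⁻¹`: the
difference of the two sides is `λ² A⁻¹ (A + λ I)⁻¹ A⁻¹`.
-/

open Matrix

namespace Matrix

section InverseIdentities

variable {n α : Type*} [Fintype n] [DecidableEq n] [CommRing α]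

theorem inv_sub_inv_add_smul_one {A : Matrix n n α} {c : α} (hA : IsUnit A)
    (hB : IsUnit (A + c • 1)) :
    A⁻¹ - (A + c • 1)⁻¹ = c • (A⁻¹ * (A + c • 1)⁻¹) := by
  rw [inv_sub_inv (iff_of_true hA hB), add_sub_cancel_left, Matrix.mul_smul, Matrix.mul_one,
    Matrix.smul_mul]

theorem inv_add_smul_one_sub_inv_add_smul_inv_mul_inv {A : Matrix n n α} {c : α}
    (hA : IsUnit A) (hB : IsUnit (A + c • 1)) :
    (A + c • 1)⁻¹ - A⁻¹ + c • (A⁻¹ * A⁻¹) = c ^ 2 • (A⁻¹ * (A + c • 1)⁻¹ * A⁻¹) := by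
  have hcomm : A⁻¹ * (A + c • 1)⁻¹ = (A + c • 1)⁻¹ * A⁻¹ := by
    rw [← mul_inv_rev, ← mul_inv_rev, Matrix.mul_add, Matrix.add_mul, Matrix.mul_smul,
      Matrix.smul_mul, Matrix.mul_one, Matrix.one_mul]
  calc (A + c • 1)⁻¹ - A⁻¹ + c • (A⁻¹ * A⁻¹)
      = c • (A⁻¹ * A⁻¹) - (A⁻¹ - (A + c • 1)⁻¹) := by abel
    _ = c • (A⁻¹ * (A⁻¹ - (A + c • 1)⁻¹)) := by
        rw [Matrix.mul_sub, smul_sub, inv_sub_inv_add_smul_one hA hB]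
    _ = c ^ 2 • (A⁻¹ * (A + c • 1)⁻¹ * A⁻¹) := by
        rw [inv_sub_inv_add_smul_one hA hB, Matrix.mul_smul, smul_smul, ← sq, Matrix.mul_assoc,
          hcomm]

end InverseIdentities

open scoped ComplexOrder MatrixOrder in
theorem PosDef.inv_sub_smul_inv_mul_inv_le_inv_add_smul_one {n 𝕜 : Type*} [Fintype n]
    [DecidableEq n] [RCLike 𝕜] {A : Matrix n n 𝕜} (hA : A.PosDef) {c : 𝕜} (hc : 0 ≤ c) :
    A⁻¹ - c • (A⁻¹ * A⁻¹) ≤ (A + c • 1)⁻¹ := by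
  have hB : (A + c • 1).PosDef := hA.add_posSemidef (PosSemidef.one.smul hc)
  rw [le_iff, sub_sub_eq_add_sub, add_sub_right_comm,
    inv_add_smul_one_sub_inv_add_smul_inv_mul_inv hA.isUnit hB.isUnit]
  refine PosSemidef.smul ?_ (pow_nonneg hc 2)
  simpa only [hA.inv.isHermitian.eq] using hB.inv.posSemidef.conjTranspose_mul_mul_same A⁻¹

theorem transpose_mulVec_dotProduct_transpose_mulVec {m n R : Type*} [Fintype m]
    [Fintype n] [CommSemiring R] (X : Matrix m n R) (u v : m → R) :
    (Xᵀ *ᵥ u) ⬝ᵥ (Xᵀ *ᵥ v) = u ⬝ᵥ (X * Xᵀ) *ᵥ v := by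
  rw [mulVec_transpose, ← dotProduct_mulVec, mulVec_mulVec]

theorem two_mul_dotProduct_sub_dotProduct_self_le {n : Type*} [Fintype n] (x y : n → ℝ) :
    2 * (x ⬝ᵥ y) - x ⬝ᵥ x ≤ y ⬝ᵥ y := by
  have h := dotProduct_self_star_nonneg (y - x)
  simp only [star_trivial, sub_dotProduct, dotProduct_sub, dotProduct_comm y x] at h
  linarith

open scoped MatrixOrder in
theorem PosDef.dotProduct_inv_mulVec_sub_le {n : Type*} [Fintype n] [DecidableEq n]
    {A : Matrix n n ℝ} (hA : A.PosDef) {c : ℝ} (hc : 0 ≤ c) (y : n → ℝ) :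
    y ⬝ᵥ A⁻¹ *ᵥ y - c * (A⁻¹ *ᵥ y ⬝ᵥ A⁻¹ *ᵥ y) ≤ y ⬝ᵥ (A + c • 1)⁻¹ *ᵥ y := by
  have hsymm : A⁻¹ᵀ = A⁻¹ := hA.inv.isHermitian.eq
  have h := PosSemidef.dotProduct_mulVec_nonneg
    (le_iff.mp (hA.inv_sub_smul_inv_mul_inv_le_inv_add_smul_one hc)) y
  have hy : y ⬝ᵥ A⁻¹ *ᵥ A⁻¹ *ᵥ y = A⁻¹ *ᵥ y ⬝ᵥ A⁻¹ *ᵥ y := by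
    rw [dotProduct_mulVec, ← mulVec_transpose, hsymm]
  rw [star_trivial, sub_mulVec, sub_mulVec, smul_mulVec, ← mulVec_mulVec, dotProduct_sub,
    dotProduct_sub, dotProduct_smul, smul_eq_mul, hy] at h
  linarith

end Matrix

/-- Tangent-line lower bound for the squared norm of the ridge solution:
`‖θ_λ‖² ≥ ‖θ_MN‖² − 2λ·θ_MNᵀX⁺(X⁺)ᵀθ_MN` for every `λ ≥ 0`. -/
theorem ridge_norm_tangent_bound {N M : ℕ}
    (X : Matrix (Fin N) (Fin M) ℝ) (Y : Fin N → ℝ)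
    (hX : IsUnit (X * Xᵀ).det)
    (Xplus : Matrix (Fin M) (Fin N) ℝ) (hXplus : Xplus = Xᵀ * (X * Xᵀ)⁻¹)
    (θMN : Fin M → ℝ) (hθMN : θMN = Xplus.mulVec Y)
    (lam : ℝ) (hlam : 0 ≤ lam)
    (θlam : Fin M → ℝ)
    (hθlam : θlam =
      (Xᵀ * (X * Xᵀ + lam • (1 : Matrix (Fin N) (Fin N) ℝ))⁻¹).mulVec Y) :
    θlam ⬝ᵥ θlam ≥ θMN ⬝ᵥ θMN - 2 * lam * (θMN ⬝ᵥ (Xplus * Xplusᵀ).mulVec θMN) := by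
  set A := X * Xᵀ
  have hA : A.PosDef := (posSemidef_self_mul_conjTranspose X).posDef_iff_isUnit.mpr
    ((isUnit_iff_isUnit_det A).mpr hX)
  have hsymm : A⁻¹ᵀ = A⁻¹ := hA.inv.isHermitian.eq
  have hAu : A *ᵥ (A⁻¹ *ᵥ Y) = Y := by rw [mulVec_mulVec, mul_nonsing_inv A hX, one_mulVec]
  have hMN : θMN = Xᵀ *ᵥ (A⁻¹ *ᵥ Y) := by rw [hθMN, hXplus, mulVec_mulVec]
  have hXplusT : Xplusᵀ *ᵥ θMN = A⁻¹ *ᵥ Y := by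
    rw [hMN, hXplus, transpose_mul, transpose_transpose, ← mulVec_mulVec, mulVec_mulVec _ X, hAu,
      hsymm]
  have hnorm : θMN ⬝ᵥ θMN = Y ⬝ᵥ A⁻¹ *ᵥ Y := by
    rw [hMN, transpose_mulVec_dotProduct_transpose_mulVec, hAu, dotProduct_comm]
  have hcross : θMN ⬝ᵥ θlam = Y ⬝ᵥ (A + lam • 1)⁻¹ *ᵥ Y := by
    rw [dotProduct_comm, hMN, hθlam, ← mulVec_mulVec, transpose_mulVec_dotProduct_transpose_mulVec,
      hAu, dotProduct_comm]
  have hquad : θMN ⬝ᵥ (Xplus * Xplusᵀ) *ᵥ θMN = A⁻¹ *ᵥ Y ⬝ᵥ A⁻¹ *ᵥ Y := by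
    rw [← hXplusT, ← transpose_transpose Xplus, transpose_mulVec_dotProduct_transpose_mulVec,
      transpose_transpose]
  have hloewner := hA.dotProduct_inv_mulVec_sub_le hlam Y
  have htangent := two_mul_dotProduct_sub_dotProduct_self_le θMN θlam
  rw [hquad]
  linarith
end

section
/- Assume x_⊥ ≠ 0 (so X₊X₊ᵀ is invertible) and Y ≠ 0. Then for every y ∈ ℝ there exists λ ≥ 0 such that the ridge solution on the augmented data satisfies the norm constraint exactly: ‖X₊ᵀ(X₊X₊ᵀ + λI)⁻¹ Y₊(y)‖ = ‖θ_MN‖. -/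
/-!
The ridge solution `θ(λ) = X₊ᵀ (X₊ X₊ᵀ + λ I)⁻¹ Y₊` is continuous in `λ ≥ 0`: since `x_⊥ ≠ 0`, the
test input is not in the row space of `X`, so `X₊` has independent rows and `X₊ X₊ᵀ` is positive
definite. At `λ = 0` it interpolates the augmented data, in particular `X θ(0) = Y`, so
`‖θ(0)‖ ≥ ‖θ_MN‖` because `θ_MN` is the minimum-norm solution of `X θ = Y`. For `λ > 0` one has
`4 λ ‖θ(λ)‖² ≤ ‖Y₊‖²`, so `‖θ(λ)‖` eventually drops below `‖θ_MN‖ > 0`, and the intermediate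
value theorem gives the required `λ`.
-/

open Matrix

namespace Matrix

section RowSpace

variable {m n R : Type*} [Fintype m] [Fintype n] [DecidableEq m] [CommRing R]

theorem vecMul_injective_of_isUnit_det_mul_transpose {X : Matrix m n R}
    (hX : IsUnit (X * Xᵀ).det) : Function.Injective X.vecMul := by
  have h : Function.Injective (X * Xᵀ).vecMul :=
    vecMul_injective_of_isUnit ((isUnit_iff_isUnit_det _).2 hX)
  refine .of_comp (f := Xᵀ.vecMul) ?_
  simpa only [Function.comp_def, vecMul_vecMul] using h

theorem notMem_span_row_of_mulVec_ne_zero [DecidableEq n] {X : Matrix m n R} {x : n → R}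
    (hX : IsUnit (X * Xᵀ).det) (hx : (1 - Xᵀ * (X * Xᵀ)⁻¹ * X) *ᵥ x ≠ 0) :
    x ∉ Submodule.span R (Set.range X.row) := by
  intro hmem
  obtain ⟨c, rfl⟩ := (Submodule.mem_span_range_iff_exists_fun R).1 hmem
  have hrow : ∑ i, c i • X.row i = Xᵀ *ᵥ c := by
    rw [mulVec_transpose, vecMul_eq_sum]
    rfl
  apply hx
  rw [hrow, mulVec_mulVec, Matrix.sub_mul, Matrix.mul_assoc, Matrix.mul_assoc,
    nonsing_inv_mul _ hX, Matrix.mul_one, Matrix.one_mul, sub_self, zero_mulVec]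

end RowSpace

section Snoc

variable {N : ℕ} {n : Type*}

theorem vecMul_of_snoc_injective {K : Type*} [Field K] {X : Matrix (Fin N) n K} {x : n → K}
    (hX : Function.Injective X.vecMul) (hx : x ∉ Submodule.span K (Set.range X.row)) :
    Function.Injective (of (Fin.snoc X x : Fin (N + 1) → n → K)).vecMul := by
  rw [vecMul_injective_iff] at hX ⊢
  exact linearIndependent_finSnoc.2 ⟨hX, hx⟩

theorem of_snoc_mulVec_castSucc [Fintype n] {α : Type*} [NonUnitalNonAssocSemiring α]
    (X : Matrix (Fin N) n α) (x v : n → α) (i : Fin N) :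
    (of (Fin.snoc X x : Fin (N + 1) → n → α) *ᵥ v) i.castSucc = (X *ᵥ v) i :=
  congrArg (· ⬝ᵥ v) (Fin.snoc_castSucc (α := fun _ => n → α) (p := X) (x := x) (i := i))

end Snoc

section Ridge

variable {m n : Type*} [Fintype n]

theorem PosDef.mul_transpose_add_smul_one [DecidableEq m] {A : Matrix m n ℝ}
    (hA : (A * Aᵀ).PosDef) {lam : ℝ} (hlam : 0 ≤ lam) :
    (A * Aᵀ + lam • (1 : Matrix m m ℝ)).PosDef :=
  hA.add_posSemidef (PosSemidef.one.smul hlam)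

variable [Fintype m]

theorem mul_transpose_mulVec_dotProduct (A : Matrix m n ℝ) (w : m → ℝ) :
    (A * Aᵀ) *ᵥ w ⬝ᵥ w = Aᵀ *ᵥ w ⬝ᵥ Aᵀ *ᵥ w := by
  rw [← mulVec_mulVec, dotProduct_comm, dotProduct_mulVec, ← mulVec_transpose]

variable [DecidableEq m]

noncomputable def ridgeSolution (A : Matrix m n ℝ) (b : m → ℝ) (lam : ℝ) : n → ℝ :=
  (Aᵀ * (A * Aᵀ + lam • (1 : Matrix m m ℝ))⁻¹) *ᵥ b

variable (A : Matrix m n ℝ) (b : m → ℝ)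

theorem posDef_mul_transpose_add_smul_one_of_pos {lam : ℝ} (hlam : 0 < lam) :
    (A * Aᵀ + lam • (1 : Matrix m m ℝ)).PosDef := by
  simpa [add_comm] using
    (PosDef.one.smul hlam).add_posSemidef (posSemidef_self_mul_conjTranspose A)

theorem four_mul_ridgeSolution_dotProduct_le {lam : ℝ} (hlam : 0 < lam) :
    4 * lam * (ridgeSolution A b lam ⬝ᵥ ridgeSolution A b lam) ≤ b ⬝ᵥ b := by
  set B := A * Aᵀ + lam • (1 : Matrix m m ℝ)
  set w := B⁻¹ *ᵥ b
  have hB : IsUnit B.det :=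
    (isUnit_iff_isUnit_det B).1 (posDef_mul_transpose_add_smul_one_of_pos A hlam).isUnit
  have hBw : B *ᵥ w = b := by
    rw [mulVec_mulVec, mul_nonsing_inv _ hB, one_mulVec]
  have hθ : ridgeSolution A b lam = Aᵀ *ᵥ w := (mulVec_mulVec _ _ _).symm
  have hbw : b ⬝ᵥ w = ridgeSolution A b lam ⬝ᵥ ridgeSolution A b lam + lam * (w ⬝ᵥ w) := by
    conv_lhs => rw [← hBw]
    rw [add_mulVec, add_dotProduct, mul_transpose_mulVec_dotProduct, hθ, smul_mulVec,
      one_mulVec, smul_dotProduct, smul_eq_mul]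
  -- expand `0 ≤ ‖b - 2λ w‖²` and substitute `hbw`
  have hsq := dotProduct_self_star_nonneg (b - (2 * lam) • w)
  simp only [star_trivial, sub_dotProduct, dotProduct_sub, smul_dotProduct, dotProduct_smul,
    smul_eq_mul, dotProduct_comm w b, hbw] at hsq
  nlinarith

theorem mulVec_ridgeSolution_zero (hA : IsUnit (A * Aᵀ).det) :
    A *ᵥ ridgeSolution A b 0 = b := by
  rw [ridgeSolution, zero_smul, add_zero, mulVec_mulVec, ← Matrix.mul_assoc,
    mul_nonsing_inv _ hA, one_mulVec]

theorem ridgeSolution_zero_dotProduct_le (hA : IsUnit (A * Aᵀ).det) {θ : n → ℝ}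
    (hθ : A *ᵥ θ = b) :
    ridgeSolution A b 0 ⬝ᵥ ridgeSolution A b 0 ≤ θ ⬝ᵥ θ := by
  set θ₀ := ridgeSolution A b 0
  have hAd : A *ᵥ (θ - θ₀) = 0 := by
    rw [mulVec_sub, hθ, mulVec_ridgeSolution_zero A b hA, sub_self]
  -- `θ₀` lies in the row space of `A`, which is orthogonal to `ker A`
  have horth : θ₀ ⬝ᵥ (θ - θ₀) = 0 := by
    generalize θ - θ₀ = d at hAd ⊢
    rw [show θ₀ = Aᵀ *ᵥ ((A * Aᵀ + (0 : ℝ) • 1)⁻¹ *ᵥ b) from (mulVec_mulVec _ _ _).symm,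
      dotProduct_comm, dotProduct_mulVec, ← mulVec_transpose, transpose_transpose, hAd,
      zero_dotProduct]
  have hd := dotProduct_self_star_nonneg (θ - θ₀)
  simp only [star_trivial, sub_dotProduct, dotProduct_sub, dotProduct_comm θ θ₀] at hd horth
  linarith

theorem continuousOn_ridgeSolution (hA : (A * Aᵀ).PosDef) :
    ContinuousOn (ridgeSolution A b) (Set.Ici 0) := by
  have hinv : ContinuousOn (fun lam : ℝ => (A * Aᵀ + lam • (1 : Matrix m m ℝ))⁻¹)
      (Set.Ici 0) := fun lam hlam => by
    refine (continuousAt_matrix_inv _ ?_).comp_continuousWithinAt (by fun_prop)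
    rw [Ring.inverse_eq_inv']
    exact continuousAt_inv₀ (hA.mul_transpose_add_smul_one hlam).det_pos.ne'
  exact ((continuous_const.matrix_mul continuous_id).matrix_mulVec
    continuous_const).comp_continuousOn hinv

theorem exists_ridgeSolution_dotProduct_eq (hA : (A * Aᵀ).PosDef) {r : ℝ} (hr : 0 < r)
    (hr₀ : r ≤ ridgeSolution A b 0 ⬝ᵥ ridgeSolution A b 0) :
    ∃ lam, 0 ≤ lam ∧ ridgeSolution A b lam ⬝ᵥ ridgeSolution A b lam = r := by
  set lam₀ := b ⬝ᵥ b / r + 1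
  have hlam₀ : 0 < lam₀ := by
    have : 0 ≤ b ⬝ᵥ b := by simpa using dotProduct_star_self_nonneg b
    positivity
  have hlam₀r : ridgeSolution A b lam₀ ⬝ᵥ ridgeSolution A b lam₀ ≤ r := by
    have := four_mul_ridgeSolution_dotProduct_le A b hlam₀
    have : b ⬝ᵥ b ≤ (lam₀ - 1) * r := by simp [lam₀, hr.ne']
    nlinarith
  have hcont : ContinuousOn (fun lam => ridgeSolution A b lam ⬝ᵥ ridgeSolution A b lam)
      (Set.Icc 0 lam₀) := by
    have := (continuousOn_ridgeSolution A b hA).mono (Set.Icc_subset_Ici_self : Set.Icc 0 lam₀ ⊆ _)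
    exact (continuous_id.dotProduct continuous_id).comp_continuousOn this
  obtain ⟨lam, hlam, hr⟩ := intermediate_value_Icc' hlam₀.le hcont ⟨hlam₀r, hr₀⟩
  exact ⟨lam, hlam.1, hr⟩

end Ridge

end Matrix

theorem EuclideanSpace.norm_equiv_symm_eq_iff {ι : Type*} [Fintype ι] {u v : ι → ℝ} :
    ‖(WithLp.equiv 2 (ι → ℝ)).symm u‖ = ‖(WithLp.equiv 2 (ι → ℝ)).symm v‖ ↔
      u ⬝ᵥ u = v ⬝ᵥ v := by
  rw [← sq_eq_sq₀ (norm_nonneg _) (norm_nonneg _), ← real_inner_self_eq_norm_sq,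
    ← real_inner_self_eq_norm_sq]
  exact Iff.rfl

/-- Existence of a regularization factor `λ ≥ 0` for which the ridge solution on the
augmented data meets the norm constraint `‖θ_λ‖ = ‖θ_MN‖` exactly. -/
theorem exists_lambda_norm_constraint {N M : ℕ}
    (X : Matrix (Fin N) (Fin M) ℝ) (Y : Fin N → ℝ) (x : Fin M → ℝ)
    (hX : IsUnit (X * Xᵀ).det)
    (Xplus : Matrix (Fin M) (Fin N) ℝ) (hXplus : Xplus = Xᵀ * (X * Xᵀ)⁻¹)
    (θMN : Fin M → ℝ) (hθMN : θMN = Xplus.mulVec Y)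
    (xperp : Fin M → ℝ)
    (hxperp : xperp = ((1 : Matrix (Fin M) (Fin M) ℝ) - Xplus * X).mulVec x)
    (hxperp_ne : xperp ≠ 0)
    (hY : Y ≠ 0)
    (Xp : Matrix (Fin (N + 1)) (Fin M) ℝ) (hXp : Xp = Matrix.of (Fin.snoc X x))
    (y : ℝ) :
    ∃ lam : ℝ, 0 ≤ lam ∧
      ‖(WithLp.equiv 2 (Fin M → ℝ)).symm
          ((Xpᵀ * (Xp * Xpᵀ + lam • (1 : Matrix (Fin (N + 1)) (Fin (N + 1)) ℝ))⁻¹).mulVec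
            (Fin.snoc Y y))‖ =
        ‖(WithLp.equiv 2 (Fin M → ℝ)).symm θMN‖ := by
  have hXpd : (Xp * Xpᵀ).PosDef := by
    have hinj := vecMul_of_snoc_injective (vecMul_injective_of_isUnit_det_mul_transpose hX)
      (notMem_span_row_of_mulVec_ne_zero hX (hXplus ▸ hxperp ▸ hxperp_ne))
    subst hXp
    simpa using PosDef.mul_conjTranspose_self _ hinj
  have hXθ : X *ᵥ ridgeSolution Xp (Fin.snoc Y y) 0 = Y := funext fun i => by
    rw [← of_snoc_mulVec_castSucc X x, ← hXp,
      mulVec_ridgeSolution_zero _ _ ((isUnit_iff_isUnit_det _).1 hXpd.isUnit), Fin.snoc_castSucc]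
  have hθMN_eq : θMN = ridgeSolution X Y 0 := by simp [ridgeSolution, hθMN, hXplus]
  have hr : 0 < θMN ⬝ᵥ θMN := by
    have hpos := dotProduct_star_self_pos_iff (v := θMN)
    rw [star_trivial] at hpos
    refine hpos.2 fun h => hY ?_
    rw [← mulVec_ridgeSolution_zero X Y hX, ← hθMN_eq, h, mulVec_zero]
  obtain ⟨lam, hlam, heq⟩ := exists_ridgeSolution_dotProduct_eq Xp (Fin.snoc Y y) hXpd hr
    (hθMN_eq ▸ ridgeSolution_zero_dotProduct_le X Y hX hXθ)
  exact ⟨lam, hlam, EuclideanSpace.norm_equiv_symm_eq_iff.2 heq⟩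
end

section
/- The norm of the ridge solution is nonincreasing in the regularization parameter: for all 0 ≤ λ₁ ≤ λ₂, ‖Xᵀ(X Xᵀ + λ₂I)⁻¹Y‖ ≤ ‖Xᵀ(X Xᵀ + λ₁I)⁻¹Y‖. -/
/-!
Write `c λ = (X Xᵀ + λ)⁻¹ Y`, so that `X Xᵀ c λ + λ c λ = Y`. For `e = Xᵀ (c λ₁ - c λ₂)` this
gives `(λ₂ - λ₁) (‖Xᵀ c λ₁‖² - ‖Xᵀ c λ₂‖²) = 2 ‖X e‖² + (λ₁ + λ₂) ‖e‖² ≥ 0`, an identity that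
holds for any bounded operator between Hilbert spaces in place of `X`.
-/

open Matrix WithLp

open scoped InnerProductSpace InnerProduct

namespace ContinuousLinearMap

variable {E F : Type*} [NormedAddCommGroup E] [InnerProductSpace ℝ E] [CompleteSpace E]
  [NormedAddCommGroup F] [InnerProductSpace ℝ F] [CompleteSpace F]

theorem sub_mul_sub_norm_sq_adjoint_eq (T : E →L[ℝ] F) {l₁ l₂ : ℝ} {c₁ c₂ : F}
    (h : T ((T†) c₁) + l₁ • c₁ = T ((T†) c₂) + l₂ • c₂) :
    (l₂ - l₁) * (‖(T†) c₁‖ ^ 2 - ‖(T†) c₂‖ ^ 2) =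
      2 * ‖T ((T†) (c₁ - c₂))‖ ^ 2 + (l₁ + l₂) * ‖(T†) (c₁ - c₂)‖ ^ 2 := by
  set e := (T†) (c₁ - c₂)
  have hTe : T e = l₂ • c₂ - l₁ • c₁ := by
    simp only [e, map_sub]
    linear_combination (norm := module) h
  have hsum : (l₂ - l₁) • (c₁ + c₂) = (2 : ℝ) • T e + (l₁ + l₂) • (c₁ - c₂) := by
    rw [hTe]; module
  have hdiff : ‖(T†) c₁‖ ^ 2 - ‖(T†) c₂‖ ^ 2 = ⟪T e, c₁ + c₂⟫_ℝ := by
    rw [← adjoint_inner_right]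
    simp only [e, map_sub, map_add]
    rw [inner_sub_left, inner_add_right, inner_add_right, real_inner_self_eq_norm_sq,
      real_inner_self_eq_norm_sq, real_inner_comm ((T†) c₁)]
    ring
  have hnorm : ⟪T e, c₁ - c₂⟫_ℝ = ‖e‖ ^ 2 := by
    rw [← adjoint_inner_right, real_inner_self_eq_norm_sq]
  rw [hdiff, ← inner_smul_right, hsum, inner_add_right, inner_smul_right, inner_smul_right,
    real_inner_self_eq_norm_sq, hnorm]

theorem norm_adjoint_le_of_add_smul_eq (T : E →L[ℝ] F) {l₁ l₂ : ℝ} {c₁ c₂ : F}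
    (h : T ((T†) c₁) + l₁ • c₁ = T ((T†) c₂) + l₂ • c₂) (h₁₂ : l₁ < l₂) (hl : 0 ≤ l₁ + l₂) :
    ‖(T†) c₂‖ ≤ ‖(T†) c₁‖ := by
  have hprod : 0 ≤ (l₂ - l₁) * (‖(T†) c₁‖ ^ 2 - ‖(T†) c₂‖ ^ 2) := by
    rw [T.sub_mul_sub_norm_sq_adjoint_eq h]
    positivity
  have hsq := nonneg_of_mul_nonneg_right hprod (sub_pos.2 h₁₂)
  exact (pow_le_pow_iff_left₀ (norm_nonneg _) (norm_nonneg _) two_ne_zero).mp (by linarith)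

end ContinuousLinearMap

namespace Matrix

variable {m n : Type*} [Fintype m] [Fintype n]

theorem adjoint_toContinuousLinearMap_toEuclideanLin [DecidableEq m] [DecidableEq n]
    (X : Matrix m n ℝ) (y : EuclideanSpace ℝ m) :
    ((LinearMap.toContinuousLinearMap (toEuclideanLin X))†) y = toEuclideanLin Xᵀ y := by
  rw [← ContinuousLinearMap.coe_coe, ← ContinuousLinearMap.adjoint_toLinearMap,
    LinearMap.coe_toContinuousLinearMap, ← toEuclideanLin_conjTranspose_eq_adjoint,
    conjTranspose_eq_transpose_of_trivial]

theorem toContinuousLinearMap_toEuclideanLin_adjoint_add_smul [DecidableEq m] [DecidableEq n]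
    (X : Matrix m n ℝ) (l : ℝ) (c : m → ℝ) :
    let T := LinearMap.toContinuousLinearMap (toEuclideanLin X)
    T ((T†) (toLp 2 c)) + l • toLp 2 c = toLp 2 ((X * Xᵀ + l • 1) *ᵥ c) := by
  intro T
  rw [adjoint_toContinuousLinearMap_toEuclideanLin]
  simp only [T, LinearMap.coe_toContinuousLinearMap', toLpLin_toLp, toLin'_apply, mulVec_mulVec,
    add_mulVec, smul_mulVec, one_mulVec, toLp_add, toLp_smul]

theorem isUnit_det_mul_transpose_add_smul [DecidableEq m] (X : Matrix m n ℝ)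
    (hX : IsUnit (X * Xᵀ).det) {l : ℝ} (hl : 0 ≤ l) : IsUnit (X * Xᵀ + l • 1).det := by
  have hpsd : (X * Xᵀ).PosSemidef := by
    simpa using posSemidef_self_mul_conjTranspose X
  have hpd : (X * Xᵀ).PosDef := hpsd.posDef_iff_isUnit.2 ((isUnit_iff_isUnit_det _).2 hX)
  exact (hpd.add_posSemidef (PosSemidef.one.smul hl)).isUnit.map detMonoidHom

end Matrix

/-- The norm of the ridge solution is nonincreasing in the regularization parameter. -/
theorem ridge_norm_antitone {N M : ℕ}
    (X : Matrix (Fin N) (Fin M) ℝ) (Y : Fin N → ℝ)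
    (hX : IsUnit (X * Xᵀ).det)
    (lam₁ lam₂ : ℝ) (h₁ : 0 ≤ lam₁) (h₁₂ : lam₁ ≤ lam₂) :
    ‖(WithLp.equiv 2 (Fin M → ℝ)).symm
        ((Xᵀ * (X * Xᵀ + lam₂ • (1 : Matrix (Fin N) (Fin N) ℝ))⁻¹).mulVec Y)‖ ≤
      ‖(WithLp.equiv 2 (Fin M → ℝ)).symm
        ((Xᵀ * (X * Xᵀ + lam₁ • (1 : Matrix (Fin N) (Fin N) ℝ))⁻¹).mulVec Y)‖ := by
  obtain rfl | hlt := h₁₂.eq_or_lt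
  · exact le_rfl
  set T := LinearMap.toContinuousLinearMap (toEuclideanLin X)
  set c : ℝ → EuclideanSpace ℝ (Fin N) := fun l => toLp 2 ((X * Xᵀ + l • 1)⁻¹ *ᵥ Y)
  have hsol : ∀ l, (WithLp.equiv 2 _).symm ((Xᵀ * (X * Xᵀ + l • 1)⁻¹) *ᵥ Y) = (T†) (c l) := by
    intro l
    rw [adjoint_toContinuousLinearMap_toEuclideanLin, toLpLin_toLp, WithLp.equiv_symm_apply,
      toLin'_apply, mulVec_mulVec]
  have hreg : ∀ l, 0 ≤ l → T ((T†) (c l)) + l • c l = toLp 2 Y := by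
    intro l hl
    rw [toContinuousLinearMap_toEuclideanLin_adjoint_add_smul, mulVec_mulVec,
      mul_nonsing_inv _ (isUnit_det_mul_transpose_add_smul X hX hl), one_mulVec]
  rw [hsol, hsol]
  exact T.norm_adjoint_le_of_add_smul_eq ((hreg lam₁ h₁).trans (hreg lam₂ (h₁.trans hlt.le)).symm)
    hlt (by linarith)
end
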